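/- For every complex λ with |λ| = 1 that is not a root of unity, (1/n) ∑_{j=1}^{n} λ^{j²} → 0 as n → ∞. -/

import Mathlib

open Filter Topology

open Finset Complex

section aux

lemma geom_bound {r : ℂ} (hr : r ≠ 1) (h1 : ‖r‖ = 1) (n : ℕ) :
    ‖∑ j ∈ range n, r ^ j‖ ≤ 2 / ‖r - 1‖ := by
  have hd : 0 < ‖r - 1‖ := by
    simpa [sub_eq_zero] using norm_pos_iff.mpr (sub_ne_zero.mpr hr)
  rw [geom_sum_eq hr, norm_div]
  gcongr
  calc ‖r ^ n - 1‖ ≤ ‖r ^ n‖ + ‖(1:ℂ)‖ := norm_sub_le _ _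
    _ = 2 := by rw [norm_pow, h1]; norm_num

lemma corr_term (l : ℂ) (hl : ‖l‖ = 1) (h' d j : ℕ) :
    l ^ ((j + (h' + d) + 1) ^ 2) * (starRingEnd ℂ) l ^ ((j + h' + 1) ^ 2)
      = l ^ (d * (2 * h' + d + 2)) * (l ^ (2 * d)) ^ j := by
  have hcc : l * (starRingEnd ℂ) l = 1 := by
    rw [Complex.mul_conj]; norm_cast
    rw [Complex.normSq_eq_norm_sq, hl]; norm_num
  have key : (j + (h' + d) + 1) ^ 2 = (j + h' + 1) ^ 2 + (d * (2 * h' + d + 2) + 2 * d * j) := by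
    ring
  rw [key, pow_add]
  calc l ^ ((j + h' + 1) ^ 2) * l ^ (d * (2 * h' + d + 2) + 2 * d * j)
        * (starRingEnd ℂ) l ^ ((j + h' + 1) ^ 2)
      = (l * (starRingEnd ℂ) l) ^ ((j + h' + 1) ^ 2) * l ^ (d * (2 * h' + d + 2) + 2 * d * j) := by
        rw [mul_pow]; ring
    _ = l ^ (d * (2 * h' + d + 2)) * (l ^ (2 * d)) ^ j := by
        rw [hcc, one_pow, one_mul, pow_add, ← pow_mul]

lemma corr_sum_aux (l : ℂ) (hl : ‖l‖ = 1) (hroot : ∀ m : ℕ, 0 < m → l ^ m ≠ 1)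
    {h h' : ℕ} (hlt : h' < h) (n : ℕ) :
    ‖∑ j ∈ range n, l ^ ((j + h + 1) ^ 2) * (starRingEnd ℂ) l ^ ((j + h' + 1) ^ 2)‖
      ≤ 2 / ‖l ^ (2 * (h - h')) - 1‖ := by
  obtain ⟨d, hd, rfl⟩ : ∃ d, 0 < d ∧ h = h' + d := ⟨h - h', by omega, by omega⟩
  have hsub : h' + d - h' = d := by omega
  rw [hsub]
  calc ‖∑ j ∈ range n, l ^ ((j + (h' + d) + 1) ^ 2) * (starRingEnd ℂ) l ^ ((j + h' + 1) ^ 2)‖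
      = ‖∑ j ∈ range n, l ^ (d * (2 * h' + d + 2)) * (l ^ (2 * d)) ^ j‖ := by
        congr 1
        exact Finset.sum_congr rfl fun j _ => corr_term l hl h' d j
    _ = ‖l ^ (d * (2 * h' + d + 2)) * ∑ j ∈ range n, (l ^ (2 * d)) ^ j‖ := by
        rw [← mul_sum]
    _ = ‖∑ j ∈ range n, (l ^ (2 * d)) ^ j‖ := by
        rw [norm_mul, norm_pow, hl, one_pow, one_mul]
    _ ≤ 2 / ‖l ^ (2 * d) - 1‖ :=
        geom_bound (hroot _ (by omega)) (by rw [norm_pow, hl, one_pow]) n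

lemma corr_sum (l : ℂ) (hl : ‖l‖ = 1) (hroot : ∀ m : ℕ, 0 < m → l ^ m ≠ 1)
    {h h' : ℕ} (hne : h ≠ h') (n : ℕ) :
    ‖∑ j ∈ range n, l ^ ((j + h + 1) ^ 2) * (starRingEnd ℂ) l ^ ((j + h' + 1) ^ 2)‖
      ≤ 2 / ‖l ^ (2 * (h ⊔ h' - h ⊓ h')) - 1‖ := by
  rcases hne.lt_or_gt with hlt | hlt
  · have hmax : h ⊔ h' - h ⊓ h' = h' - h := by omega
    rw [hmax]
    have hc : ∑ j ∈ range n, l ^ ((j + h + 1) ^ 2) * (starRingEnd ℂ) l ^ ((j + h' + 1) ^ 2)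
        = (starRingEnd ℂ) (∑ j ∈ range n, l ^ ((j + h' + 1) ^ 2) * (starRingEnd ℂ) l ^ ((j + h + 1) ^ 2)) := by
      rw [map_sum]
      refine Finset.sum_congr rfl fun j _ => ?_
      rw [map_mul, map_pow, map_pow, Complex.conj_conj]
      ring
    rw [hc, RCLike.norm_conj]
    exact corr_sum_aux l hl hroot hlt n
  · have hmax : h ⊔ h' - h ⊓ h' = h - h' := by omega
    rw [hmax]
    exact corr_sum_aux l hl hroot hlt n


lemma norm_sum_le_card (l : ℂ) (hl : ‖l‖ = 1) (s : Finset ℕ) :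
    ‖∑ i ∈ s, l ^ ((i + 1) ^ 2)‖ ≤ s.card := by
  calc ‖∑ i ∈ s, l ^ ((i + 1) ^ 2)‖ ≤ ∑ i ∈ s, ‖l ^ ((i + 1) ^ 2)‖ := norm_sum_le _ _
    _ = s.card := by simp [norm_pow, hl]

lemma shift_bound (l : ℂ) (hl : ‖l‖ = 1) (h n : ℕ) :
    ‖(∑ j ∈ range n, l ^ ((j + 1) ^ 2)) - ∑ j ∈ range n, l ^ ((j + h + 1) ^ 2)‖ ≤ 2 * h := by
  have e1 : ∑ j ∈ range n, l ^ ((j + h + 1) ^ 2) = ∑ i ∈ Finset.Ico h (h + n), l ^ ((i + 1) ^ 2) := by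
    rw [Finset.sum_Ico_eq_sum_range]
    simp only [Nat.add_sub_cancel_left]
    exact Finset.sum_congr rfl fun j _ => by rw [add_comm h j]
  have e2 : ∑ i ∈ Finset.Ico h (h + n), l ^ ((i + 1) ^ 2)
      = (∑ i ∈ range (h + n), l ^ ((i + 1) ^ 2)) - ∑ i ∈ range h, l ^ ((i + 1) ^ 2) := by
    rw [Finset.sum_Ico_eq_sub _ (Nat.le_add_right h n)]
  have e3 : ∑ i ∈ Finset.Ico n (h + n), l ^ ((i + 1) ^ 2)
      = (∑ i ∈ range (h + n), l ^ ((i + 1) ^ 2)) - ∑ i ∈ range n, l ^ ((i + 1) ^ 2) := by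
    rw [Finset.sum_Ico_eq_sub _ (Nat.le_add_left n h)]
  have e4 : (∑ j ∈ range n, l ^ ((j + 1) ^ 2)) - ∑ j ∈ range n, l ^ ((j + h + 1) ^ 2)
      = (∑ i ∈ range h, l ^ ((i + 1) ^ 2)) - ∑ i ∈ Finset.Ico n (h + n), l ^ ((i + 1) ^ 2) := by
    rw [e1, e2, e3]; abel
  rw [e4]
  calc ‖_ - _‖ ≤ ‖∑ i ∈ range h, l ^ ((i + 1) ^ 2)‖ + ‖∑ i ∈ Finset.Ico n (h + n), l ^ ((i + 1) ^ 2)‖ :=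
        norm_sub_le _ _
    _ ≤ (range h).card + (Finset.Ico n (h + n)).card :=
        add_le_add (norm_sum_le_card l hl _) (norm_sum_le_card l hl _)
    _ ≤ 2 * h := by
        simp only [Finset.card_range, Nat.card_Ico]
        have : h + n - n = h := by omega
        rw [this]; push_cast; ring_nf; norm_num

lemma step1 (l : ℂ) (hl : ‖l‖ = 1) (H n : ℕ) :
    (H : ℝ) * ‖∑ j ∈ range n, l ^ ((j + 1) ^ 2)‖
      ≤ (∑ j ∈ range n, ‖∑ h ∈ range H, l ^ ((j + h + 1) ^ 2)‖) + 2 * H ^ 2 := by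
  set S : ℂ := ∑ j ∈ range n, l ^ ((j + 1) ^ 2) with hS
  have e0 : ∑ j ∈ range n, ∑ h ∈ range H, l ^ ((j + h + 1) ^ 2)
      = ∑ h ∈ range H, ∑ j ∈ range n, l ^ ((j + h + 1) ^ 2) := Finset.sum_comm
  have e1 : (H : ℂ) * S = ∑ h ∈ range H, S := by
    rw [Finset.sum_const, Finset.card_range, nsmul_eq_mul]
  have key : ‖(H : ℂ) * S - ∑ j ∈ range n, ∑ h ∈ range H, l ^ ((j + h + 1) ^ 2)‖ ≤ 2 * H ^ 2 := by
    rw [e0, e1, ← Finset.sum_sub_distrib]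
    calc ‖∑ h ∈ range H, (S - ∑ j ∈ range n, l ^ ((j + h + 1) ^ 2))‖
        ≤ ∑ h ∈ range H, (2 * h : ℝ) :=
          norm_sum_le_of_le _ fun h _ => shift_bound l hl h n
      _ ≤ ∑ h ∈ range H, (2 * H : ℝ) := by
          refine Finset.sum_le_sum fun h hh => ?_
          have := Finset.mem_range.mp hh
          have : (h : ℝ) ≤ H := by exact_mod_cast this.le
          linarith
      _ = 2 * H ^ 2 := by rw [Finset.sum_const, Finset.card_range, nsmul_eq_mul]; ring
  have tri : (H : ℝ) * ‖S‖ ≤ ‖∑ j ∈ range n, ∑ h ∈ range H, l ^ ((j + h + 1) ^ 2)‖ + 2 * H ^ 2 := by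
    have : (H : ℝ) * ‖S‖ = ‖(H : ℂ) * S‖ := by
      rw [norm_mul, Complex.norm_natCast]
    rw [this]
    calc ‖(H : ℂ) * S‖ ≤ ‖∑ j ∈ range n, ∑ h ∈ range H, l ^ ((j + h + 1) ^ 2)‖
          + ‖(H : ℂ) * S - ∑ j ∈ range n, ∑ h ∈ range H, l ^ ((j + h + 1) ^ 2)‖ := by
            exact norm_le_insert' _ _
      _ ≤ _ := add_le_add_right key _
  refine tri.trans (add_le_add_left ?_ _)
  exact norm_sum_le _ _


noncomputable def DD (l : ℂ) (H : ℕ) : ℝ :=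
  ∑ h ∈ range H, ∑ h' ∈ range H,
    if h = h' then 0 else 2 / ‖l ^ (2 * (h ⊔ h' - h ⊓ h')) - 1‖

lemma DD_nonneg (l : ℂ) (H : ℕ) : 0 ≤ DD l H := by
  refine Finset.sum_nonneg fun h _ => Finset.sum_nonneg fun h' _ => ?_
  split
  · exact le_refl 0
  · positivity

lemma step3 (l : ℂ) (hl : ‖l‖ = 1) (hroot : ∀ m : ℕ, 0 < m → l ^ m ≠ 1) (H n : ℕ) :
    ∑ j ∈ range n, ‖∑ h ∈ range H, l ^ ((j + h + 1) ^ 2)‖ ^ 2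
      ≤ (n : ℝ) * H + DD l H := by
  have expand : ∀ j, (‖∑ h ∈ range H, l ^ ((j + h + 1) ^ 2)‖ : ℝ) ^ 2
      = (∑ h ∈ range H, ∑ h' ∈ range H,
          l ^ ((j + h + 1) ^ 2) * (starRingEnd ℂ) l ^ ((j + h' + 1) ^ 2)).re := by
    intro j
    set z : ℂ := ∑ h ∈ range H, l ^ ((j + h + 1) ^ 2) with hz
    have h1 : ‖z‖ ^ 2 = (z * (starRingEnd ℂ) z).re := by
      rw [Complex.mul_conj, Complex.ofReal_re, Complex.normSq_eq_norm_sq]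
    rw [h1]
    congr 1
    rw [hz, map_sum, Finset.sum_mul_sum]
    exact Finset.sum_congr rfl fun h _ => Finset.sum_congr rfl fun h' _ => by rw [map_pow]
  calc ∑ j ∈ range n, ‖∑ h ∈ range H, l ^ ((j + h + 1) ^ 2)‖ ^ 2
      = (∑ j ∈ range n, ∑ h ∈ range H, ∑ h' ∈ range H,
          l ^ ((j + h + 1) ^ 2) * (starRingEnd ℂ) l ^ ((j + h' + 1) ^ 2)).re := by
        rw [Complex.re_sum]
        exact Finset.sum_congr rfl fun j _ => expand j
    _ ≤ ‖∑ j ∈ range n, ∑ h ∈ range H, ∑ h' ∈ range H,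
          l ^ ((j + h + 1) ^ 2) * (starRingEnd ℂ) l ^ ((j + h' + 1) ^ 2)‖ :=
        Complex.re_le_norm _
    _ = ‖∑ h ∈ range H, ∑ h' ∈ range H, ∑ j ∈ range n,
          l ^ ((j + h + 1) ^ 2) * (starRingEnd ℂ) l ^ ((j + h' + 1) ^ 2)‖ := by
        rw [Finset.sum_comm]
        congr 1
        exact Finset.sum_congr rfl fun h _ => Finset.sum_comm
    _ ≤ ∑ h ∈ range H, ∑ h' ∈ range H, ‖∑ j ∈ range n,
          l ^ ((j + h + 1) ^ 2) * (starRingEnd ℂ) l ^ ((j + h' + 1) ^ 2)‖ :=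
        (norm_sum_le _ _).trans (Finset.sum_le_sum fun h _ => norm_sum_le _ _)
    _ ≤ ∑ h ∈ range H, ∑ h' ∈ range H,
          ((if h = h' then (n : ℝ) else 0) +
           (if h = h' then 0 else 2 / ‖l ^ (2 * (h ⊔ h' - h ⊓ h')) - 1‖)) := by
        refine Finset.sum_le_sum fun h _ => Finset.sum_le_sum fun h' _ => ?_
        by_cases hhh : h = h'
        · subst hhh
          rw [if_pos rfl, if_pos rfl, add_zero]
          calc ‖∑ j ∈ range n, l ^ ((j + h + 1) ^ 2) * (starRingEnd ℂ) l ^ ((j + h + 1) ^ 2)‖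
              ≤ ∑ j ∈ range n, ‖l ^ ((j + h + 1) ^ 2) * (starRingEnd ℂ) l ^ ((j + h + 1) ^ 2)‖ :=
                norm_sum_le _ _
            _ = ∑ j ∈ range n, (1 : ℝ) := by
                refine Finset.sum_congr rfl fun j _ => ?_
                rw [norm_mul, norm_pow, norm_pow, RCLike.norm_conj, hl]
                norm_num
            _ = (n : ℝ) := by simp
        · simp only [if_neg hhh, zero_add]
          exact corr_sum l hl hroot hhh n
    _ = (n : ℝ) * H + DD l H := by
        simp only [Finset.sum_add_distrib]
        congr 1
        · rw [Finset.sum_congr rfl fun h hh =>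
            (Finset.sum_ite_eq (range H) h (fun _ => (n : ℝ))).trans (if_pos hh)]
          rw [Finset.sum_const, Finset.card_range, nsmul_eq_mul, mul_comm]

end aux


/-- Weyl equidistribution along squares: for every complex `λ` on the unit circle that is
not a root of unity, the exponential averages `(1/n) ∑_{j=1}^{n} λ^{j²}` tend to `0`. -/
theorem weyl_squares
    (l : ℂ) (hl : ‖l‖ = 1) (hroot : ∀ m : ℕ, 0 < m → l ^ m ≠ 1) :
    Tendsto (fun n : ℕ => (n : ℂ)⁻¹ * ∑ j ∈ Finset.range n, l ^ ((j + 1) ^ 2))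
      atTop (𝓝 0) := by
  rw [NormedAddCommGroup.tendsto_nhds_zero]
  intro ε hε
  set H : ℕ := ⌈8 / ε ^ 2⌉₊ + 1 with hHdef
  have hHpos : (0 : ℝ) < H := by positivity
  have hH8 : 8 / ε ^ 2 < H := by
    calc 8 / ε ^ 2 ≤ (⌈8 / ε ^ 2⌉₊ : ℝ) := Nat.le_ceil _
      _ < H := by rw [hHdef]; push_cast; linarith
  have h8 : 8 < (H : ℝ) * ε ^ 2 := (div_lt_iff₀ (by positivity)).mp hH8
  have hsq : Real.sqrt (2 * H) / H < ε / 2 := by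
    rw [div_lt_iff₀ hHpos]
    rw [Real.sqrt_lt' (by positivity)]
    nlinarith [hHpos, h8]
  filter_upwards [eventually_ge_atTop 1, eventually_ge_atTop ⌈DD l H⌉₊,
    eventually_ge_atTop (⌈4 * (H : ℝ) / ε⌉₊ + 1)] with n hn1 hn2 hn3
  have hnpos : (0 : ℝ) < n := by exact_mod_cast hn1
  have hDDn : DD l H ≤ n := by
    calc DD l H ≤ (⌈DD l H⌉₊ : ℝ) := Nat.le_ceil _
      _ ≤ n := by exact_mod_cast hn2
  have hεn : 4 * (H : ℝ) < ε * n := by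
    have h1 : 4 * (H : ℝ) / ε ≤ (⌈4 * (H : ℝ) / ε⌉₊ : ℝ) := Nat.le_ceil _
    have h2 : (⌈4 * (H : ℝ) / ε⌉₊ : ℝ) < n := by
      have h4 : ((⌈4 * (H : ℝ) / ε⌉₊ : ℕ) : ℝ) + 1 ≤ n := by exact_mod_cast hn3
      linarith
    have h3 : 4 * (H : ℝ) / ε < n := lt_of_le_of_lt h1 h2
    calc 4 * (H : ℝ) = 4 * (H : ℝ) / ε * ε := by field_simp
      _ < n * ε := by exact mul_lt_mul_of_pos_right h3 hε
      _ = ε * n := mul_comm _ _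
  set S : ℂ := ∑ j ∈ Finset.range n, l ^ ((j + 1) ^ 2) with hS
  -- Step 1
  have E1 : (H : ℝ) * ‖S‖
      ≤ (∑ j ∈ Finset.range n, ‖∑ h ∈ Finset.range H, l ^ ((j + h + 1) ^ 2)‖) + 2 * H ^ 2 :=
    step1 l hl H n
  -- Cauchy–Schwarz
  have hCS : (∑ j ∈ Finset.range n, ‖∑ h ∈ Finset.range H, l ^ ((j + h + 1) ^ 2)‖) ^ 2
      ≤ (n : ℝ) * ∑ j ∈ Finset.range n, ‖∑ h ∈ Finset.range H, l ^ ((j + h + 1) ^ 2)‖ ^ 2 := by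
    have := sq_sum_le_card_mul_sum_sq
      (s := Finset.range n) (f := fun j => ‖∑ h ∈ Finset.range H, l ^ ((j + h + 1) ^ 2)‖)
    simpa using this
  have E3 : ∑ j ∈ Finset.range n, ‖∑ h ∈ Finset.range H, l ^ ((j + h + 1) ^ 2)‖ ^ 2
      ≤ (n : ℝ) * H + DD l H := step3 l hl hroot H n
  have hH1 : (1 : ℝ) ≤ H := by exact_mod_cast Nat.one_le_iff_ne_zero.mpr (by omega)
  have h1 : (∑ j ∈ Finset.range n, ‖∑ h ∈ Finset.range H, l ^ ((j + h + 1) ^ 2)‖) ^ 2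
      ≤ 2 * H * n ^ 2 := by
    calc (∑ j ∈ Finset.range n, ‖∑ h ∈ Finset.range H, l ^ ((j + h + 1) ^ 2)‖) ^ 2
        ≤ (n : ℝ) * ((n : ℝ) * H + DD l H) :=
          hCS.trans (mul_le_mul_of_nonneg_left E3 hnpos.le)
      _ ≤ 2 * H * n ^ 2 := by nlinarith [hDDn, hnpos, hH1]
  have hsum : (∑ j ∈ Finset.range n, ‖∑ h ∈ Finset.range H, l ^ ((j + h + 1) ^ 2)‖)
      ≤ (n : ℝ) * Real.sqrt (2 * H) := by
    have hnn : (0 : ℝ) ≤ ∑ j ∈ Finset.range n, ‖∑ h ∈ Finset.range H, l ^ ((j + h + 1) ^ 2)‖ :=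
      Finset.sum_nonneg fun j _ => norm_nonneg _
    calc (∑ j ∈ Finset.range n, ‖∑ h ∈ Finset.range H, l ^ ((j + h + 1) ^ 2)‖)
        = Real.sqrt ((∑ j ∈ Finset.range n, ‖∑ h ∈ Finset.range H, l ^ ((j + h + 1) ^ 2)‖) ^ 2) :=
          (Real.sqrt_sq hnn).symm
      _ ≤ Real.sqrt (2 * H * n ^ 2) := Real.sqrt_le_sqrt h1
      _ = (n : ℝ) * Real.sqrt (2 * H) := by
          rw [Real.sqrt_mul (by positivity), Real.sqrt_sq hnpos.le, mul_comm]
  have E : (H : ℝ) * ‖S‖ ≤ (n : ℝ) * Real.sqrt (2 * H) + 2 * H ^ 2 :=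
    E1.trans (add_le_add_left hsum _)
  have hfinal : ‖S‖ / n < ε := by
    have h2Hn : 2 * (H : ℝ) / n < ε / 2 := by
      rw [div_lt_iff₀ hnpos]; linarith
    calc ‖S‖ / n = ((H : ℝ) * ‖S‖) / ((H : ℝ) * n) := by
          rw [mul_div_mul_left _ _ hHpos.ne']
      _ ≤ ((n : ℝ) * Real.sqrt (2 * H) + 2 * H ^ 2) / ((H : ℝ) * n) := by
          apply div_le_div_of_nonneg_right E (by positivity) |>.trans_eq rfl
      _ = Real.sqrt (2 * H) / H + 2 * H / n := by
          field_simp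
      _ < ε / 2 + ε / 2 := add_lt_add hsq h2Hn
      _ = ε := add_halves ε
  calc ‖(n : ℂ)⁻¹ * S‖ = (n : ℝ)⁻¹ * ‖S‖ := by
        rw [norm_mul, norm_inv, Complex.norm_natCast]
    _ = ‖S‖ / n := by rw [inv_mul_eq_div]
    _ < ε := hfinal
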